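/- Let r be a positive integer. For every vertex v = (i,j) of the hexagonal grid there is exactly one integer n such that d(v, L_{n(r+1)}) ≤ r, where L_k = {(x,k) : x ∈ ℤ}. -/

import Mathlib

/-- The hexagonal grid in its brick wall representation: vertex set ℤ×ℤ,
with (x,y) adjacent to (x±1,y) always, and to (x,y+1) if x+y is even
(equivalently, to (x,y-1) if x+y is odd). -/
def hexGraph : SimpleGraph (ℤ × ℤ) where
  Adj u v := (u.2 = v.2 ∧ (u.1 = v.1 + 1 ∨ v.1 = u.1 + 1)) ∨
    (u.1 = v.1 ∧ ((v.2 = u.2 + 1 ∧ Even (u.1 + u.2)) ∨ (u.2 = v.2 + 1 ∧ Even (v.1 + v.2))))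
  symm := by
    refine ⟨?_⟩
    rintro u v (⟨h1, h2 | h2⟩ | ⟨h1, ⟨h2, h3⟩ | ⟨h2, h3⟩⟩)
    · exact Or.inl ⟨h1.symm, Or.inr h2⟩
    · exact Or.inl ⟨h1.symm, Or.inl h2⟩
    · exact Or.inr ⟨h1.symm, Or.inr ⟨h2, h3⟩⟩
    · exact Or.inr ⟨h1.symm, Or.inl ⟨h2, h3⟩⟩
  loopless := by refine ⟨?_⟩; rintro ⟨x, y⟩ (⟨_, h | h⟩ | ⟨_, ⟨h, _⟩ | ⟨h, _⟩⟩) <;> omega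

/-- The graph distance from a vertex to the horizontal line L_k = {(x,k) : x ∈ ℤ}. -/
noncomputable def hexLineDist (u : ℤ × ℤ) (k : ℤ) : ℕ :=
  sInf {n : ℕ | ∃ x : ℤ, hexGraph.dist u (x, k) = n}

/-! Every edge of the brick wall changes `hexLevel` by one, and the line `L_k` is exactly the set
of vertices of level `2k - 1` or `2k`. Hence the distance from `v` to `L_k` is the distance from
`hexLevel v` to `{2k - 1, 2k}`, so `d(v, L_{n(r+1)}) ≤ r` says that `hexLevel v + r + 1` lies in
`[2n(r+1), 2(n+1)(r+1))`, and these intervals partition `ℤ`. -/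

def hexLevel (v : ℤ × ℤ) : ℤ := 2 * v.2 - (v.1 + v.2) % 2

lemma snd_eq_iff_hexLevel_mem_Icc (v : ℤ × ℤ) (k : ℤ) :
    v.2 = k ↔ hexLevel v ∈ Set.Icc (2 * k - 1) (2 * k) := by
  simp only [hexLevel, Set.mem_Icc]
  omega

lemma hexGraph_adj_fst_add_one (x y : ℤ) : hexGraph.Adj (x, y) (x + 1, y) :=
  Or.inl ⟨rfl, Or.inr rfl⟩

lemma abs_hexLevel_sub_le_one_of_adj {u v : ℤ × ℤ} (h : hexGraph.Adj u v) :
    |hexLevel u - hexLevel v| ≤ 1 := by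
  obtain ⟨a, b⟩ := u
  obtain ⟨c, d⟩ := v
  simp only [hexLevel, abs_le]
  rcases h with ⟨h1, h2 | h2⟩ | ⟨h1, ⟨h2, h3⟩ | ⟨h2, h3⟩⟩ <;>
    simp only [Int.even_iff] at * <;> omega

lemma abs_hexLevel_sub_le_length {u v : ℤ × ℤ} (p : hexGraph.Walk u v) :
    |hexLevel u - hexLevel v| ≤ p.length := by
  induction p with
  | nil => simp
  | @cons a b c h p ih =>
    calc |hexLevel a - hexLevel c|
        ≤ |hexLevel a - hexLevel b| + |hexLevel b - hexLevel c| := abs_sub_le _ _ _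
      _ ≤ 1 + p.length := add_le_add (abs_hexLevel_sub_le_one_of_adj h) ih
      _ = (p.cons h).length := by rw [SimpleGraph.Walk.length_cons]; push_cast; ring

lemma exists_adj_hexLevel_eq_add_one (v : ℤ × ℤ) :
    ∃ w, hexGraph.Adj v w ∧ hexLevel w = hexLevel v + 1 := by
  obtain ⟨x, y⟩ := v
  rcases Int.emod_two_eq_zero_or_one (x + y) with h | h
  · refine ⟨(x, y + 1), Or.inr ⟨rfl, Or.inl ⟨rfl, Int.even_iff.2 h⟩⟩, ?_⟩
    simp only [hexLevel]
    omega
  · exact ⟨(x + 1, y), hexGraph_adj_fst_add_one x y, by simp only [hexLevel]; omega⟩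

lemma exists_adj_hexLevel_eq_sub_one (v : ℤ × ℤ) :
    ∃ w, hexGraph.Adj v w ∧ hexLevel w = hexLevel v - 1 := by
  obtain ⟨x, y⟩ := v
  rcases Int.emod_two_eq_zero_or_one (x + y) with h | h
  · exact ⟨(x + 1, y), hexGraph_adj_fst_add_one x y, by simp only [hexLevel]; omega⟩
  · refine ⟨(x, y - 1), Or.inr ⟨rfl, Or.inr ⟨by ring, Int.even_iff.2 ?_⟩⟩, ?_⟩ <;>
      simp only [hexLevel] <;> omega

lemma exists_walk_hexLevel_eq_add (v : ℤ × ℤ) (d : ℤ) :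
    ∃ w, ∃ p : hexGraph.Walk v w, p.length = d.natAbs ∧ hexLevel w = hexLevel v + d := by
  induction d using Int.induction_on with
  | zero => exact ⟨v, .nil, rfl, by ring⟩
  | succ i ih =>
    obtain ⟨w, p, hp, hw⟩ := ih
    obtain ⟨w', hadj, hw'⟩ := exists_adj_hexLevel_eq_add_one w
    exact ⟨w', p.concat hadj, by rw [SimpleGraph.Walk.length_concat]; omega, by omega⟩
  | pred i ih =>
    obtain ⟨w, p, hp, hw⟩ := ih
    obtain ⟨w', hadj, hw'⟩ := exists_adj_hexLevel_eq_sub_one w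
    exact ⟨w', p.concat hadj, by rw [SimpleGraph.Walk.length_concat]; omega, by omega⟩

lemma hexGraph_reachable_of_snd_eq (x x' y : ℤ) : hexGraph.Reachable (x, y) (x', y) := by
  suffices ∀ d : ℤ, hexGraph.Reachable (x, y) (x + d, y) by
    simpa using this (x' - x)
  intro d
  induction d using Int.induction_on with
  | zero => simp
  | succ i ih =>
    rw [← add_assoc]
    exact ih.trans (hexGraph_adj_fst_add_one _ y).reachable
  | pred i ih =>
    have hstep := (hexGraph_adj_fst_add_one (x + (-i - 1)) y).reachable.symm
    rw [show x + (-i - 1) + 1 = x + -i by ring] at hstep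
    exact ih.trans hstep

lemma hexGraph_preconnected : hexGraph.Preconnected := by
  rintro u ⟨x, y⟩
  obtain ⟨w, p, -, hw⟩ := exists_walk_hexLevel_eq_add u (2 * y - hexLevel u)
  have hwy : w.2 = y := (snd_eq_iff_hexLevel_mem_Icc w y).2 ⟨by omega, by omega⟩
  exact p.reachable.trans (hwy ▸ hexGraph_reachable_of_snd_eq w.1 x w.2)

lemma abs_hexLevel_sub_le_dist (u v : ℤ × ℤ) :
    |hexLevel u - hexLevel v| ≤ hexGraph.dist u v := by
  obtain ⟨p, hp⟩ := (hexGraph_preconnected u v).exists_walk_length_eq_dist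
  exact hp ▸ abs_hexLevel_sub_le_length p

lemma hexLineDist_eq_max (v : ℤ × ℤ) (k : ℤ) :
    (hexLineDist v k : ℤ) = max (hexLevel v - 2 * k) (2 * k - 1 - hexLevel v) := by
  apply le_antisymm
  · obtain ⟨⟨x, y⟩, p, hp, hw⟩ :=
      exists_walk_hexLevel_eq_add v (max (min (hexLevel v) (2 * k)) (2 * k - 1) - hexLevel v)
    obtain rfl : y = k := (snd_eq_iff_hexLevel_mem_Icc (x, y) k).2 ⟨by omega, by omega⟩
    have hdist : hexLineDist v y ≤ hexGraph.dist v (x, y) := Nat.sInf_le ⟨x, rfl⟩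
    have := hexGraph.dist_le p
    omega
  · obtain ⟨x, hx⟩ : ∃ x : ℤ, hexGraph.dist v (x, k) = hexLineDist v k :=
      Nat.sInf_mem (s := {n : ℕ | ∃ x : ℤ, hexGraph.dist v (x, k) = n}) ⟨_, 0, rfl⟩
    have hlevel := (snd_eq_iff_hexLevel_mem_Icc (x, k) k).1 rfl
    have hle := abs_le.1 (hx ▸ abs_hexLevel_sub_le_dist v (x, k))
    simp only [Set.mem_Icc] at hlevel
    omega

theorem hex_unique_nearby_line_general (r : ℕ) (i j : ℤ) :
    ∃! n : ℤ, hexLineDist (i, j) (n * ((r : ℤ) + 1)) ≤ r := by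
  have hperiod : (0 : ℤ) < 2 * (r + 1) := by positivity
  refine (existsUnique_congr fun n => ?_).2 <|
    existsUnique_zsmul_near_of_pos hperiod (hexLevel (i, j) + r + 1)
  rw [← Nat.cast_le (α := ℤ), hexLineDist_eq_max, max_le_iff, smul_eq_mul, smul_eq_mul]
  constructor <;> rintro ⟨h₁, h₂⟩ <;> constructor <;> linarith

/-- every vertex is within distance r of exactly one of the
horizontal lines L_{n(r+1)}. -/
theorem hex_unique_nearby_line (r : ℕ) (hr : 0 < r) (i j : ℤ) :
    ∃! n : ℤ, hexLineDist (i, j) (n * ((r : ℤ) + 1)) ≤ r :=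
  hex_unique_nearby_line_general r i j
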